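/- Let n ≥ 1, let X ⊆ ℝⁿ be a nonempty closed set, and let U ⊆ ℝⁿ \ X be an open set such that d_X is differentiable at every point of U. Then d_X is continuously differentiable (of class C¹) on U. -/

import Mathlib

/-!
If `x` is a nearest point of `X` to `p` and `d = d_X` is differentiable at `p`, then `d` decreases
with slope `-1` along the segment from `p` to `x`; since `d` is `1`-Lipschitz its gradient has norm
at most `1`, so equality in Cauchy–Schwarz forces `d(p) ∇d(p) = p - x`. Thus on `U` the nearest
point `π(p)` is unique and `∇d(p) = (p - π(p)) / d(p)`. By compactness, nearest points of points
close to `p` accumulate only at nearest points of `p`, so `π`, and with it `∇d`, is continuous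
on `U`.
-/

open Metric Set Filter InnerProductSpace AffineMap
open scoped Topology RealInnerProductSpace Gradient

section NormedSpace

variable {E : Type*} [NormedAddCommGroup E] [NormedSpace ℝ E] {X : Set E} {p x : E}

lemma infDist_lineMap_of_dist_eq_infDist (hx : x ∈ X) (hpx : dist p x = infDist p X)
    {t : ℝ} (ht : t ∈ Icc (0 : ℝ) 1) :
    infDist (lineMap p x t) X = (1 - t) * infDist p X := by
  apply le_antisymm
  · calc infDist (lineMap p x t) X ≤ dist (lineMap p x t) x := infDist_le_dist_of_mem hx
      _ = (1 - t) * infDist p X := by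
        rw [dist_lineMap_right, hpx, Real.norm_of_nonneg (sub_nonneg.2 ht.2)]
  · have := infDist_le_infDist_add_dist (x := p) (y := lineMap p x t) (s := X)
    rw [dist_left_lineMap, hpx, Real.norm_of_nonneg ht.1] at this
    linarith

lemma fderiv_infDist_apply_sub_of_dist_eq_infDist
    (hd : DifferentiableAt ℝ (fun q => infDist q X) p) (hx : x ∈ X)
    (hpx : dist p x = infDist p X) :
    fderiv ℝ (fun q => infDist q X) p (x - p) = -infDist p X := by
  have h0 : (0 : ℝ) ∈ Icc (0 : ℝ) 1 := ⟨le_rfl, zero_le_one⟩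
  have hchain : HasDerivWithinAt (fun t : ℝ => infDist (lineMap p x t) X)
      (fderiv ℝ (fun q => infDist q X) p (x - p)) (Icc 0 1) 0 := by
    have hd' : HasFDerivAt (fun q => infDist q X) (fderiv ℝ (fun q => infDist q X) p)
        (lineMap p x (0 : ℝ)) := by
      rw [lineMap_apply_zero]; exact hd.hasFDerivAt
    exact hd'.comp_hasDerivWithinAt 0 hasDerivWithinAt_lineMap
  have hlinear : HasDerivWithinAt (fun t : ℝ => infDist (lineMap p x t) X)
      (-infDist p X) (Icc 0 1) 0 := by
    have : HasDerivAt (fun t : ℝ => (1 - t) * infDist p X) (-infDist p X) 0 := by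
      simpa using ((hasDerivAt_id (0 : ℝ)).const_sub 1).mul_const (infDist p X)
    exact this.hasDerivWithinAt.congr (fun t ht => infDist_lineMap_of_dist_eq_infDist hx hpx ht)
      (infDist_lineMap_of_dist_eq_infDist hx hpx h0)
  exact (uniqueDiffOn_Icc zero_lt_one 0 h0).eq_deriv _ hchain hlinear

end NormedSpace

section InnerProductSpace

variable {E : Type*} [NormedAddCommGroup E] [InnerProductSpace ℝ E]

lemma norm_smul_eq_neg_of_norm_le_one_of_inner_eq_neg_norm {g v : E} (hg : ‖g‖ ≤ 1)
    (hgv : ⟪g, v⟫_ℝ = -‖v‖) : ‖v‖ • g = -v := by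
  have hsq : ‖‖v‖ • g + v‖ ^ 2 ≤ 0 := by
    rw [norm_add_sq_real, norm_smul, real_inner_smul_left, hgv, Real.norm_of_nonneg (norm_nonneg v)]
    have hg2 : ‖g‖ ^ 2 ≤ 1 := by nlinarith [norm_nonneg g]
    nlinarith [mul_le_mul_of_nonneg_left hg2 (sq_nonneg ‖v‖)]
  rw [eq_neg_iff_add_eq_zero, ← norm_eq_zero]
  nlinarith [norm_nonneg (‖v‖ • g + v)]

variable [CompleteSpace E] {X : Set E} {p x : E}

lemma infDist_smul_gradient_infDist_eq_sub (hd : DifferentiableAt ℝ (fun q => infDist q X) p)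
    (hx : x ∈ X) (hpx : dist p x = infDist p X) :
    infDist p X • ∇ (fun q => infDist q X) p = p - x := by
  have hnorm : ‖∇ (fun q => infDist q X) p‖ ≤ 1 := by
    rw [gradient, LinearIsometryEquiv.norm_map]
    simpa using norm_fderiv_le_of_lipschitz ℝ (lipschitz_infDist_pt X)
  have hinner : ⟪∇ (fun q => infDist q X) p, x - p⟫_ℝ = -‖x - p‖ := by
    rw [gradient, toDual_symm_apply, fderiv_infDist_apply_sub_of_dist_eq_infDist hd hx hpx,
      ← hpx, dist_eq_norm']
  have := norm_smul_eq_neg_of_norm_le_one_of_inner_eq_neg_norm hnorm hinner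
  rwa [← dist_eq_norm', hpx, neg_sub] at this

end InnerProductSpace

lemma continuousAt_of_forall_dist_eq_infDist {α : Type*} [MetricSpace α] [ProperSpace α]
    {X : Set α} (hX : IsClosed X) {π : α → α} (hπX : ∀ q, π q ∈ X)
    (hπ : ∀ q, dist q (π q) = infDist q X) {p : α}
    (huniq : ∀ x ∈ X, dist p x = infDist p X → x = π p) : ContinuousAt π p := by
  have hnear : ∀ ε > 0, ∀ᶠ q in 𝓝 p, dist p (π q) ≤ infDist p X + ε := by
    intro ε hε
    have hlim : Tendsto (fun q => 2 * dist q p + infDist p X) (𝓝 p) (𝓝 (infDist p X)) := by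
      have := (continuous_id.dist (continuous_const (y := p))).tendsto p
      simpa using (this.const_mul 2).add_const (infDist p X)
    filter_upwards [hlim.eventually (eventually_le_nhds (lt_add_of_pos_right _ hε))] with q hq
    calc dist p (π q) ≤ dist p q + dist q (π q) := dist_triangle _ _ _
      _ ≤ dist p q + (infDist p X + dist q p) := by
        rw [hπ]; gcongr; exact infDist_le_infDist_add_dist
      _ = 2 * dist q p + infDist p X := by rw [dist_comm p q]; ring
      _ ≤ infDist p X + ε := hq
  have hK : IsCompact (closedBall p (infDist p X + 1) ∩ X) :=
    (isCompact_closedBall p (infDist p X + 1)).inter_right hX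
  refine hK.tendsto_nhds_of_unique_mapClusterPt ?_ ?_
  · filter_upwards [hnear 1 one_pos] with q hq using ⟨mem_closedBall'.2 hq, hπX q⟩
  · rintro a ⟨-, haX⟩ ha
    refine huniq a haX (le_antisymm (le_of_forall_pos_le_add fun ε hε => ?_)
      (infDist_le_dist_of_mem haX))
    exact (isClosed_le (continuous_const.dist continuous_id) continuous_const).mem_of_mapClusterPt
      ha (hnear ε hε)

lemma contDiffOn_one_of_continuousOn_gradient {E : Type*} [NormedAddCommGroup E]
    [InnerProductSpace ℝ E] [CompleteSpace E] {f : E → ℝ} {U : Set E} (hU : IsOpen U)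
    (hd : DifferentiableOn ℝ f U) (hcont : ContinuousOn (∇ f) U) : ContDiffOn ℝ 1 f U := by
  have hfderiv : fderiv ℝ f = fun q => toDual ℝ E (∇ f q) :=
    funext fun q => ((toDual ℝ E).apply_symm_apply _).symm
  rw [show (1 : WithTop ℕ∞) = 0 + 1 from rfl, contDiffOn_succ_iff_fderiv_of_isOpen hU,
    contDiffOn_zero, hfderiv]
  exact ⟨hd, by simp, (toDual ℝ E).continuous.comp_continuousOn hcont⟩

section ProperSpace

variable {E : Type*} [NormedAddCommGroup E] [InnerProductSpace ℝ E] [ProperSpace E]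
  {X : Set E} {U : Set E}

lemma continuousOn_gradient_infDist (hXne : X.Nonempty) (hXcl : IsClosed X) (hU : IsOpen U)
    (hUX : U ⊆ Xᶜ) (hd : ∀ p ∈ U, DifferentiableAt ℝ (fun q => infDist q X) p) :
    ContinuousOn (∇ fun q => infDist q X) U := by
  choose π hπX hπ using hXcl.exists_infDist_eq_dist hXne
  have hpos : ∀ q ∈ U, 0 < infDist q X := fun q hq =>
    (hXcl.notMem_iff_infDist_pos hXne).1 (hUX hq)
  have hgrad : ∀ q ∈ U, ∇ (fun q => infDist q X) q = (infDist q X)⁻¹ • (q - π q) := by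
    intro q hq
    rw [← infDist_smul_gradient_infDist_eq_sub (hd q hq) (hπX q) (hπ q).symm,
      inv_smul_smul₀ (hpos q hq).ne']
  intro p hp
  have hπp : ContinuousAt π p :=
    continuousAt_of_forall_dist_eq_infDist hXcl hπX (fun q => (hπ q).symm) fun x hx hpx =>
      sub_right_injective <| (infDist_smul_gradient_infDist_eq_sub (hd p hp) hx hpx).symm.trans
        (infDist_smul_gradient_infDist_eq_sub (hd p hp) (hπX p) (hπ p).symm)
  have : ContinuousAt (fun q => (infDist q X)⁻¹ • (q - π q)) p :=
    ((continuous_infDist_pt X).continuousAt.inv₀ (hpos p hp).ne').smul (continuousAt_id.sub hπp)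
  exact (this.congr (eventuallyEq_of_mem (hU.mem_nhds hp) fun q hq =>
    (hgrad q hq).symm)).continuousWithinAt

theorem contDiffOn_infDist_of_differentiableAt (hXne : X.Nonempty) (hXcl : IsClosed X)
    (hU : IsOpen U) (hUX : U ⊆ Xᶜ)
    (hd : ∀ p ∈ U, DifferentiableAt ℝ (fun q => infDist q X) p) :
    ContDiffOn ℝ 1 (fun q => infDist q X) U :=
  contDiffOn_one_of_continuousOn_gradient hU (fun p hp => (hd p hp).differentiableWithinAt)
    (continuousOn_gradient_infDist hXne hXcl hU hUX hd)

end ProperSpace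

theorem distance_function_C1_on_open_set_general
    (n : ℕ) (X : Set (EuclideanSpace ℝ (Fin n))) (hXne : X.Nonempty)
    (hXcl : IsClosed X) (U : Set (EuclideanSpace ℝ (Fin n))) (hUopen : IsOpen U)
    (hUX : U ⊆ Xᶜ)
    (hdiff : ∀ p ∈ U, DifferentiableAt ℝ (fun q => Metric.infDist q X) p) :
    ContDiffOn ℝ 1 (fun q => Metric.infDist q X) U :=
  contDiffOn_infDist_of_differentiableAt hXne hXcl hUopen hUX hdiff

/-- If the distance function of a nonempty closed set `X ⊆ ℝⁿ` is
differentiable at every point of an open set `U ⊆ ℝⁿ \ X`, then it is continuously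
differentiable (of class `C¹`) on `U`. -/
theorem distance_function_C1_on_open_set
    (n : ℕ) (hn : 1 ≤ n) (X : Set (EuclideanSpace ℝ (Fin n))) (hXne : X.Nonempty)
    (hXcl : IsClosed X) (U : Set (EuclideanSpace ℝ (Fin n))) (hUopen : IsOpen U)
    (hUX : U ⊆ Xᶜ)
    (hdiff : ∀ p ∈ U, DifferentiableAt ℝ (fun q => Metric.infDist q X) p) :
    ContDiffOn ℝ 1 (fun q => Metric.infDist q X) U :=
  distance_function_C1_on_open_set_general n X hXne hXcl U hUopen hUX hdiff
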